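/- Let C be a hereditary abelian category and (N, e) a differential structure with N projective (i.e., e : N → N with e² = 0). Then (N, e) is isomorphic, in the category of differential structures, to (I ⊕ Ker e, [[0,0],[μ,0]]) where I ≅ Im e and μ : I → Ker e is induced by e. -/

import Mathlib

/-!
Since `C` is hereditary, `image e` is projective, so the short exact sequence
`0 ⟶ kernel e ⟶ N ⟶ image e ⟶ 0` splits. As `e` factors as `N ⟶ image e ⟶ kernel e ⟶ N`,
in the resulting decomposition `N ≅ image e ⊞ kernel e` it becomes the matrix `[[0,0],[μ,0]]`.
-/

open CategoryTheory CategoryTheory.Limits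

instance mono_imageToKernel' {V : Type*} [Category V] [HasZeroMorphisms V] [HasKernels V]
    [HasImages V] {A B D : V} (f : A ⟶ B) (g : B ⟶ D) (w : f ≫ g = 0) :
    Mono (imageToKernel' f g w) := by
  unfold imageToKernel'
  infer_instance

namespace CategoryTheory.ShortComplex

variable {C : Type*} [Category C]

theorem Splitting.comp_isoBinaryBiproduct_braiding [Preadditive C] [HasBinaryBiproducts C]
    {S : ShortComplex C} (h : S.Splitting) {e : S.X₂ ⟶ S.X₂} {μ : S.X₃ ⟶ S.X₁}
    (he : e = S.g ≫ μ ≫ S.f) :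
    e ≫ (h.isoBinaryBiproduct ≪≫ biprod.braiding _ _).hom =
      (h.isoBinaryBiproduct ≪≫ biprod.braiding _ _).hom ≫ biprod.fst ≫ μ ≫ biprod.inr := by
  subst he
  ext <;> simp

section Abelian

variable [Abelian C]

noncomputable abbrev kernelImage {X Y : C} (f : X ⟶ Y) : ShortComplex C :=
  ShortComplex.mk (kernel.ι f) (factorThruImage f) (by simp [← cancel_mono (image.ι f)])

theorem kernelImage_shortExact {X Y : C} (f : X ⟶ Y) : (kernelImage f).ShortExact where
  exact := exact_of_f_is_kernel _ <|
    isKernelOfComp (image.ι f) f (kernelIsKernel f) _ (image.fac f)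

end Abelian

end CategoryTheory.ShortComplex

theorem stmt2 {C : Type*} [Category C] [Abelian C]
    (hered : ∀ ⦃X Y : C⦄ (f : X ⟶ Y), Mono f → Projective Y → Projective X)
    (N : C) (hN : Projective N) (e : N ⟶ N) (he : e ≫ e = 0) :
    ∃ (I : C) (_ : I ≅ image e) (μ : I ⟶ kernel e) (φ : N ≅ I ⊞ kernel e),
      Mono μ ∧ e ≫ φ.hom = φ.hom ≫ (biprod.fst ≫ μ ≫ biprod.inr) := by
  have : Projective (image e) := hered (image.ι e) inferInstance hN
  let splitting := (ShortComplex.kernelImage_shortExact e).splittingOfProjective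
  refine ⟨image e, Iso.refl _, imageToKernel' e e he, _, inferInstance,
    splitting.comp_isoBinaryBiproduct_braiding ?_⟩
  simp [imageToKernel']
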